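/- arXiv:1807.00258 — 4 statements merged into one kernel-verified Lean document; each statement's English description precedes it below -/
import Mathlib

section
/- Let D be a real symmetric positive definite matrix indexed by a finite set Λ, let j ≠ k in Λ, and suppose there is a > 0 such that [φ; D φ] ≥ a (φ_j − φ_k)² for all φ ∈ ℝ^Λ. Then [(δ_j − δ_k); D^{-1} (δ_j − δ_k)] ≤ 1/a, where δ_j denotes the indicator vector of the coordinate j. -/
open Matrix

/-! With `ψ = D⁻¹ w` and `t = [w; D⁻¹ w] = [w; ψ]`, the hypothesis applied to `φ = ψ` reads
`a t² ≤ [ψ; D ψ] = [ψ; w] = t`, and `a t² ≤ t` with `a > 0` forces `t ≤ 1 / a`. -/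

theorem le_one_div_of_mul_sq_le {α : Type*} [Field α] [LinearOrder α] [IsStrictOrderedRing α]
    {a t : α} (ha : 0 < a) (h : a * t ^ 2 ≤ t) : t ≤ 1 / a := by
  rw [le_div_iff₀ ha]
  nlinarith

theorem Matrix.dotProduct_inv_mulVec_le_one_div {n α : Type*} [Fintype n] [DecidableEq n]
    [Field α] [LinearOrder α] [IsStrictOrderedRing α] {D : Matrix n n α} (hD : IsUnit D)
    (w : n → α) {a : α} (ha : 0 < a) (hbound : ∀ φ : n → α, a * (w ⬝ᵥ φ) ^ 2 ≤ φ ⬝ᵥ (D *ᵥ φ)) :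
    w ⬝ᵥ (D⁻¹ *ᵥ w) ≤ 1 / a := by
  have hDψ : D *ᵥ (D⁻¹ *ᵥ w) = w := by
    rw [mulVec_mulVec, mul_nonsing_inv _ ((isUnit_iff_isUnit_det D).mp hD), one_mulVec]
  refine le_one_div_of_mul_sq_le ha ?_
  simpa only [hDψ, dotProduct_comm _ w] using hbound (D⁻¹ *ᵥ w)

theorem Pi.single_sub_single_dotProduct {n α : Type*} [Fintype n] [DecidableEq n]
    [NonAssocRing α] (j k : n) (φ : n → α) :
    (Pi.single j 1 - Pi.single k 1) ⬝ᵥ φ = φ j - φ k := by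
  simp only [sub_dotProduct, single_one_dotProduct]

theorem stmt_1_general (Λ : Type*) [Fintype Λ] [DecidableEq Λ]
    (D : Matrix Λ Λ ℝ) (hD : D.PosDef)
    (j k : Λ) (a : ℝ) (ha : 0 < a)
    (hbound : ∀ φ : Λ → ℝ, a * (φ j - φ k) ^ 2 ≤ φ ⬝ᵥ (D *ᵥ φ)) :
    (Pi.single j 1 - Pi.single k 1) ⬝ᵥ (D⁻¹ *ᵥ (Pi.single j 1 - Pi.single k 1)) ≤ 1 / a :=
  dotProduct_inv_mulVec_le_one_div hD.isUnit _ ha fun φ => by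
    simpa only [Pi.single_sub_single_dotProduct] using hbound φ

/-- Let `D` be a real symmetric positive definite matrix indexed by a
finite set `Λ`, let `j ≠ k` in `Λ`, and suppose there is `a > 0` such that
`[φ; D φ] ≥ a (φ j − φ k)²` for all `φ ∈ ℝ^Λ`.  Then
`[(δ_j − δ_k); D⁻¹ (δ_j − δ_k)] ≤ 1 / a`. -/
theorem stmt_1 (Λ : Type*) [Fintype Λ] [DecidableEq Λ]
    (D : Matrix Λ Λ ℝ) (hD : D.PosDef)
    (j k : Λ) (hjk : j ≠ k) (a : ℝ) (ha : 0 < a)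
    (hbound : ∀ φ : Λ → ℝ, a * (φ j - φ k) ^ 2 ≤ φ ⬝ᵥ (D *ᵥ φ)) :
    (Pi.single j 1 - Pi.single k 1) ⬝ᵥ (D⁻¹ *ᵥ (Pi.single j 1 - Pi.single k 1)) ≤ 1 / a :=
  stmt_1_general Λ D hD j k a ha hbound
end

section
/- Fix d ≥ 1, a finite box Λ ⊂ ℤ^d with periodic (torus) edge set E(T_N), and ε > 0. For t ∈ ℝ^{E(T_N)} let D(t) be the symmetric positive definite matrix on ℝ^Λ determined by the quadratic form [f; D(t) f] = Σ_{jk ∈ E(T_N)} e^{t_{jk}} (f_j − f_k)² + ε Σ_{j ∈ Λ} f_j². Then the map t ↦ ln det D(t) is a convex function of t on ℝ^{E(T_N)}. -/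
open Matrix

/-- Vertex set of the `d`-dimensional discrete torus with side lengths `N`. -/
abbrev TorusV (d : ℕ) (N : Fin d → ℕ) := ∀ i : Fin d, ZMod (N i)

/-- Edge set of the discrete torus: an edge is a pair `(x, i)` joining `x` and
`x + eᵢ`, where `eᵢ` is the `i`-th coordinate unit vector.  (For side lengths at
least `3` this is a faithful indexing of the nearest-neighbor edges, including
the wrap-around edges.) -/
abbrev TorusE (d : ℕ) (N : Fin d → ℕ) := TorusV d N × Fin d

/-- The coordinate unit vector in direction `i` on the torus. -/
def unitv {d : ℕ} {N : Fin d → ℕ} (i : Fin d) : TorusV d N :=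
  fun j => if j = i then 1 else 0

/-!
Write `D(t) = ε I + B diag(e^t) Bᵀ` with `B` the vertex–edge incidence matrix of the torus.
Then `D(t) = P(t) P(t)ᵀ` for `P(t) = [√ε I | B diag(e^{t/2})]`, and `D((s+u)/2) = P(s) P(u)ᵀ`.
The Cauchy–Schwarz inequality for determinants, `det(P Qᵀ)² ≤ det(P Pᵀ) det(Q Qᵀ)`, which
follows from the Schur complement of the positive semidefinite block matrix
`[P; Q] [P; Q]ᵀ`, makes `log det D` midpoint convex; being continuous, it is convex.
-/

namespace Matrix

variable {n m : Type*}

lemma IsSymm.mul_mul_transpose_same {R : Type*} [CommSemiring R] [Fintype m] {A : Matrix m m R}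
    (hA : A.IsSymm) (B : Matrix n m R) : (B * A * Bᵀ).IsSymm := by
  rw [IsSymm, transpose_mul, transpose_mul, transpose_transpose, hA.eq, Matrix.mul_assoc]

lemma fromCols_mul_diagonal_mul_transpose {R : Type*} [CommSemiring R] {k : Type*} [Fintype k]
    [Fintype m] [DecidableEq m] (C : Matrix n k R) (B : Matrix n m R) (a b : m → R) :
    fromCols C (B * diagonal a) * (fromCols C (B * diagonal b))ᵀ
      = C * Cᵀ + B * diagonal (a * b) * Bᵀ := by
  rw [transpose_fromCols, fromCols_mul_fromRows, transpose_mul, diagonal_transpose,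
    Matrix.mul_assoc, ← Matrix.mul_assoc (diagonal a), diagonal_mul_diagonal, Matrix.mul_assoc]
  rfl

variable [Fintype n]

lemma IsSymm.ext_of_dotProduct_mulVec [DecidableEq n] {K : Type*} [Field K] [NeZero (2 : K)]
    {A B : Matrix n n K} (hA : A.IsSymm) (hB : B.IsSymm)
    (h : ∀ f : n → K, f ⬝ᵥ A *ᵥ f = f ⬝ᵥ B *ᵥ f) : A = B :=
  toBilin'.injective <| LinearMap.BilinForm.ext_of_isSymm (isSymm_toBilin'_iff_isSymm.mpr hA)
    (isSymm_toBilin'_iff_isSymm.mpr hB) fun f => by simpa only [toBilin'_apply'] using h f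

lemma dotProduct_mul_diagonal_mul_transpose_mulVec {R : Type*} [CommSemiring R] [Fintype m]
    [DecidableEq m] (B : Matrix n m R) (w : m → R) (f : n → R) :
    f ⬝ᵥ (B * diagonal w * Bᵀ) *ᵥ f = ∑ e, w e * (f ᵥ* B) e ^ 2 := by
  rw [← mulVec_mulVec, ← mulVec_mulVec, dotProduct_mulVec, mulVec_transpose]
  exact Finset.sum_congr rfl fun e _ => by rw [mulVec_diagonal]; ring

variable [DecidableEq n]

open scoped Pointwise in
lemma PosSemidef.one_le_det_one_add {T : Matrix n n ℝ} (hT : T.PosSemidef) :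
    1 ≤ (1 + T).det := by
  have hH : (1 + T).IsHermitian := isHermitian_one.add hT.1
  rw [hH.det_eq_prod_eigenvalues]
  refine Finset.one_le_prod fun i _ => ?_
  have hmem : hH.eigenvalues i ∈ ({1} : Set ℝ) + spectrum ℝ T := by
    rw [spectrum.singleton_add_eq, map_one]
    exact hH.eigenvalues_mem_spectrum_real i
  obtain ⟨_, rfl, μ, hμ, hi⟩ := hmem
  have hμ0 : 0 ≤ μ := (posSemidef_iff_isHermitian_and_spectrum_nonneg.mp hT).2 hμ
  simp only [RCLike.ofReal_real_eq_id, id, ← hi]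
  linarith

open scoped MatrixOrder in
lemma PosSemidef.det_le_det_add {G S : Matrix n n ℝ} (hG : G.PosSemidef) (hS : S.PosSemidef) :
    G.det ≤ (G + S).det := by
  by_cases hG0 : G.det = 0
  · exact hG0 ▸ (hG.add hS).det_nonneg
  have hGpd : G.PosDef := hG.posDef_iff_det_ne_zero.mpr hG0
  obtain ⟨R, rfl⟩ := CStarAlgebra.nonneg_iff_eq_star_mul_self.mp hS.nonneg
  rw [star_eq_conjTranspose, det_add_mul _ _ (isUnit_iff_ne_zero.mpr hG0)]
  exact le_mul_of_one_le_right hG.det_nonneg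
    (hGpd.inv.posSemidef.mul_mul_conjTranspose_same R).one_le_det_one_add

lemma det_mul_transpose_sq_le [Fintype m] {P Q : Matrix n m ℝ} (hP : (P * Pᵀ).PosDef) :
    (P * Qᵀ).det ^ 2 ≤ (P * Pᵀ).det * (Q * Qᵀ).det := by
  simp only [← conjTranspose_eq_transpose_of_trivial] at *
  set A := P * Pᴴ
  set C := P * Qᴴ
  have : Invertible A := hP.isUnit.invertible
  have hblock : fromRows P Q * (fromRows P Q)ᴴ = fromBlocks A C Cᴴ (Q * Qᴴ) := by
    rw [conjTranspose_fromRows_eq_fromCols_conjTranspose, fromRows_mul_fromCols, conjTranspose_mul,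
      conjTranspose_conjTranspose]
  have hschur : (Q * Qᴴ - Cᴴ * A⁻¹ * C).PosSemidef :=
    (hP.fromBlocks₁₁ C _).mp (hblock ▸ posSemidef_self_mul_conjTranspose _)
  have hle := (hP.inv.posSemidef.conjTranspose_mul_mul_same C).det_le_det_add hschur
  rw [add_sub_cancel, det_mul, det_mul, det_conjTranspose, star_trivial, det_nonsing_inv,
    Ring.inverse_eq_inv'] at hle
  have hdetA := hP.det_pos
  calc C.det ^ 2 = A.det * (C.det * A.det⁻¹ * C.det) := by field_simp
    _ ≤ A.det * (Q * Qᴴ).det := mul_le_mul_of_nonneg_left hle hdetA.le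

end Matrix

lemma nonpos_of_midpoint_le {g : ℝ → ℝ} (hg : Continuous g) (h0 : g 0 ≤ 0) (h1 : g 1 ≤ 0)
    (hmid : ∀ p q, g ((p + q) / 2) ≤ (g p + g q) / 2) {c : ℝ} (hc : c ∈ Set.Icc (0 : ℝ) 1) :
    g c ≤ 0 := by
  obtain ⟨m, hm, hmax⟩ := isCompact_Icc.exists_isMaxOn (Set.nonempty_Icc.mpr zero_le_one)
    hg.continuousOn
  suffices g m ≤ 0 from (hmax hc).trans this
  by_contra! hpos
  -- The leftmost point `c₀` where the positive maximum is attained lies in `(0, 1)`, and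
  -- midpoint convexity at `c₀ ± h` forces the maximum at `c₀ - h` as well.
  obtain ⟨c₀, ⟨hc₀, hgc₀⟩, hleast⟩ := ((isCompact_Icc (a := (0:ℝ)) (b := 1)).inter_right
    (isClosed_singleton.preimage hg) : IsCompact (Set.Icc 0 1 ∩ g ⁻¹' {g m})).exists_isLeast
    ⟨m, hm, rfl⟩
  simp only [Set.mem_preimage, Set.mem_singleton_iff] at hgc₀
  have hc₀0 : 0 < c₀ := lt_of_le_of_ne hc₀.1 (by rintro rfl; linarith)
  have hc₀1 : c₀ < 1 := lt_of_le_of_ne hc₀.2 (by rintro rfl; linarith)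
  set h := min c₀ (1 - c₀)
  have hh : 0 < h := lt_min hc₀0 (by linarith)
  have hleft : c₀ - h ∈ Set.Icc (0 : ℝ) 1 := ⟨by linarith [min_le_left c₀ (1 - c₀)], by linarith⟩
  have hright : c₀ + h ∈ Set.Icc (0 : ℝ) 1 := ⟨by linarith, by linarith [min_le_right c₀ (1 - c₀)]⟩
  have hconv := hmid (c₀ - h) (c₀ + h)
  rw [show (c₀ - h + (c₀ + h)) / 2 = c₀ by ring] at hconv
  have hr : g (c₀ + h) ≤ g m := hmax hright
  have : g (c₀ - h) = g m := le_antisymm (hmax hleft) (by linarith)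
  linarith [hleast ⟨hleft, this⟩]

lemma convexOn_univ_of_midpoint {E : Type*} [AddCommGroup E] [Module ℝ E] [TopologicalSpace E]
    [IsTopologicalAddGroup E] [ContinuousSMul ℝ E] {f : E → ℝ} (hf : Continuous f)
    (hmid : ∀ x y, f ((1 / 2 : ℝ) • (x + y)) ≤ (f x + f y) / 2) : ConvexOn ℝ Set.univ f := by
  refine ⟨convex_univ, fun x _ y _ a b ha _ hab => ?_⟩
  obtain rfl : b = 1 - a := by linarith
  let g : ℝ → ℝ := fun c => f (c • x + (1 - c) • y) - (c * f x + (1 - c) * f y)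
  have hg : Continuous g := by fun_prop
  have hgmid : ∀ p q, g ((p + q) / 2) ≤ (g p + g q) / 2 := by
    intro p q
    have h := hmid (p • x + (1 - p) • y) (q • x + (1 - q) • y)
    rw [show (1 / 2 : ℝ) • (p • x + (1 - p) • y + (q • x + (1 - q) • y))
      = ((p + q) / 2) • x + (1 - (p + q) / 2) • y by module] at h
    simp only [g]
    linarith
  have := nonpos_of_midpoint_le hg (by simp [g]) (by simp [g]) hgmid ⟨ha, by linarith⟩
  simp only [g, smul_eq_mul] at this ⊢
  linarith

open Real in
open scoped MatrixOrder in
theorem convexOn_log_det_add_mul_diagonal_exp_mul_transpose {n m : Type*} [Fintype n]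
    [DecidableEq n] [Fintype m] [DecidableEq m] {A : Matrix n n ℝ} (hA : A.PosDef)
    (B : Matrix n m ℝ) :
    ConvexOn ℝ Set.univ fun t : m → ℝ => log (A + B * diagonal (fun e => exp (t e)) * Bᵀ).det := by
  set G : (m → ℝ) → Matrix n n ℝ := fun t => A + B * diagonal (fun e => exp (t e)) * Bᵀ
  have hG : ∀ t, (G t).PosDef := fun t => hA.add_posSemidef <| by
    simpa only [conjTranspose_eq_transpose_of_trivial] using
      (posSemidef_diagonal_iff.mpr fun e => (exp_pos (t e)).le).mul_mul_conjTranspose_same B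
  obtain ⟨R, hR⟩ := CStarAlgebra.nonneg_iff_eq_star_mul_self.mp hA.posSemidef.nonneg
  let P : (m → ℝ) → Matrix n (n ⊕ m) ℝ := fun t => fromCols Rᵀ (B * diagonal fun e => exp (t e / 2))
  have hP : ∀ s u, P s * (P u)ᵀ = G ((1 / 2 : ℝ) • (s + u)) := fun s u => by
    have hexp : ((fun e => exp (s e / 2)) * fun e => exp (u e / 2))
        = fun e => exp (((1 / 2 : ℝ) • (s + u)) e) := funext fun e => by
      simp only [Pi.mul_apply, Pi.smul_apply, Pi.add_apply, smul_eq_mul, ← exp_add]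
      ring_nf
    simp only [P, G, fromCols_mul_diagonal_mul_transpose, hexp, transpose_transpose, hR,
      star_eq_conjTranspose, conjTranspose_eq_transpose_of_trivial]
  have hPself : ∀ s, P s * (P s)ᵀ = G s := fun s => by
    rw [hP, ← two_smul ℝ s, smul_smul]
    norm_num
  refine convexOn_univ_of_midpoint ?_ fun s u => ?_
  · refine Continuous.log ?_ fun t => (hG t).det_pos.ne'
    fun_prop
  · have hCS := det_mul_transpose_sq_le (Q := P u) ((hPself s).symm ▸ hG s)
    rw [hP, hPself, hPself] at hCS
    have hlog := log_le_log (pow_pos (hG _).det_pos 2) hCS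
    rw [log_pow, log_mul (hG s).det_pos.ne' (hG u).det_pos.ne'] at hlog
    push_cast at hlog
    linarith

def torusIncidence (d : ℕ) (N : Fin d → ℕ) : Matrix (TorusV d N) (TorusE d N) ℝ :=
  of fun j e => (if j = e.1 then 1 else 0) - (if j = e.1 + unitv e.2 then 1 else 0)

lemma vecMul_torusIncidence {d : ℕ} {N : Fin d → ℕ} [∀ i, NeZero (N i)] (f : TorusV d N → ℝ)
    (e : TorusE d N) : (f ᵥ* torusIncidence d N) e = f e.1 - f (e.1 + unitv e.2) := by
  simp [vecMul, dotProduct, torusIncidence, mul_sub, Finset.sum_sub_distrib]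

theorem stmt_2_general (d : ℕ) (N : Fin d → ℕ) [∀ i, NeZero (N i)]
    (ε : ℝ) (hε : 0 < ε)
    (D : (TorusE d N → ℝ) → Matrix (TorusV d N) (TorusV d N) ℝ)
    (hD : ∀ t, (D t).PosDef)
    (hform : ∀ (t : TorusE d N → ℝ) (f : TorusV d N → ℝ),
      f ⬝ᵥ ((D t) *ᵥ f) =
        (∑ e : TorusE d N, Real.exp (t e) * (f e.1 - f (e.1 + unitv e.2)) ^ 2)
          + ε * ∑ j : TorusV d N, (f j) ^ 2) :
    ConvexOn ℝ Set.univ (fun t => Real.log (D t).det) := by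
  set B := torusIncidence d N
  have hD_eq : ∀ t, D t = ε • 1 + B * diagonal (fun e => Real.exp (t e)) * Bᵀ := fun t =>
    IsSymm.ext_of_dotProduct_mulVec (isHermitian_iff_isSymm.mp (hD t).isHermitian)
      ((isSymm_one.smul ε).add ((isSymm_diagonal _).mul_mul_transpose_same B)) fun f => by
        rw [hform, add_mulVec, dotProduct_add, dotProduct_mul_diagonal_mul_transpose_mulVec,
          smul_mulVec, one_mulVec, dotProduct_smul, add_comm]
        simp only [vecMul_torusIncidence, B, smul_eq_mul, dotProduct, sq]
  simp only [hD_eq]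
  exact convexOn_log_det_add_mul_diagonal_exp_mul_transpose (PosDef.one.smul hε) B

/-- Fix `d ≥ 1`, a finite box `Λ ⊂ ℤ^d` with periodic (torus)
edge set `E(T_N)` (side lengths ≥ 3), and `ε > 0`.  For `t ∈ ℝ^{E(T_N)}` let
`D t` be the symmetric positive definite matrix on `ℝ^Λ` determined by the
quadratic form
`[f; D(t) f] = ∑_{jk ∈ E(T_N)} e^{t_{jk}} (f_j − f_k)² + ε ∑_{j ∈ Λ} f_j²`.
Then `t ↦ ln det D(t)` is convex on `ℝ^{E(T_N)}`. -/
theorem stmt_2 (d : ℕ) (hd : 1 ≤ d) (N : Fin d → ℕ) [∀ i, NeZero (N i)]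
    (hN : ∀ i, 3 ≤ N i) (ε : ℝ) (hε : 0 < ε)
    (D : (TorusE d N → ℝ) → Matrix (TorusV d N) (TorusV d N) ℝ)
    (hD : ∀ t, (D t).PosDef)
    (hform : ∀ (t : TorusE d N → ℝ) (f : TorusV d N → ℝ),
      f ⬝ᵥ ((D t) *ᵥ f) =
        (∑ e : TorusE d N, Real.exp (t e) * (f e.1 - f (e.1 + unitv e.2)) ^ 2)
          + ε * ∑ j : TorusV d N, (f j) ^ 2) :
    ConvexOn ℝ Set.univ (fun t => Real.log (D t).det) :=
  stmt_2_general d N ε hε D hD hform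
end

section
/- Fix d ≥ 1, the discrete torus T_N with vertex set Λ and edge set E(T_N), and ε > 0. For t ∈ ℝ^{E(T_N)} let D(t) be the symmetric positive definite matrix on ℝ^Λ with [f; D(t) f] = Σ_{jk ∈ E(T_N)} e^{t_{jk}} (f_j − f_k)² + ε Σ_{j∈Λ} f_j², and let G(t) = D(t)^{-1}. Let −Δ^p be the lattice Laplacian on T_N, i.e. [φ; −Δ^p φ] = Σ_{jk ∈ E(T_N)} (φ_j − φ_k)². Then for every v ∈ ℝ^Λ with Σ_{j∈Λ} v_j = 0 and every u ∈ ℝ^Λ solving −Δ^p u = v, one has 0 ≤ [v; G(t) v] ≤ Σ_{jk ∈ E(T_N)} (u_j − u_k)² e^{−t_{jk}}. -/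
/-!
Put `w = G(t) v`. Summation by parts against `−Δ^p u = v` gives
`[v; G(t) v] = [w; v] = Σ_e (∇w)_e (∇u)_e`, while `[w; D(t) w] = [w; v]` bounds
`S = Σ_e e^{t_e} (∇w)_e²` by the same quantity `B = [v; G(t) v]`; in particular `B ≥ 0`.
Cauchy–Schwarz with the weights `e^{∓t_e}` yields `B² ≤ A S ≤ A B`, where `A` is the
right-hand side, hence `B ≤ A`.
-/

open Matrix

/-- Minus the lattice Laplacian with periodic boundary conditions:
`(−Δ^p u)(x) = ∑_{y ∼ x} (u x − u y)`, the operator associated with the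
quadratic form `[φ; −Δ^p φ] = ∑_{jk ∈ E(T_N)} (φ_j − φ_k)²`. -/
def torusLap {d : ℕ} {N : Fin d → ℕ} [∀ i, NeZero (N i)]
    (u : TorusV d N → ℝ) (x : TorusV d N) : ℝ :=
  ∑ i : Fin d, ((u x - u (x + unitv i)) + (u x - u (x - unitv i)))

open Finset

variable {d : ℕ} {N : Fin d → ℕ}

def torusGrad (u : TorusV d N → ℝ) (e : TorusE d N) : ℝ :=
  u e.1 - u (e.1 + unitv e.2)

theorem sq_sum_mul_le_sum_sq_mul_exp_neg_mul_sum_exp_mul_sq {ι : Type*} (s : Finset ι)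
    (a b t : ι → ℝ) :
    (∑ i ∈ s, a i * b i) ^ 2 ≤
      (∑ i ∈ s, a i ^ 2 * Real.exp (-t i)) * ∑ i ∈ s, Real.exp (t i) * b i ^ 2 := by
  refine sum_sq_le_sum_mul_sum_of_sq_le_mul s (fun i _ => by positivity)
    (fun i _ => by positivity) fun i _ => le_of_eq ?_
  rw [show a i ^ 2 * Real.exp (-t i) * (Real.exp (t i) * b i ^ 2) =
      (a i * b i) ^ 2 * (Real.exp (-t i) * Real.exp (t i)) by ring,
    ← Real.exp_add, neg_add_cancel, Real.exp_zero, mul_one]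

theorem sum_mul_torusLap [∀ i, NeZero (N i)] (u w : TorusV d N → ℝ) :
    ∑ x, w x * torusLap u x = ∑ e, torusGrad u e * torusGrad w e := by
  simp only [torusLap, mul_sum, torusGrad, Fintype.sum_prod_type_right]
  rw [sum_comm]
  refine sum_congr rfl fun i _ => ?_
  have shift : ∑ x, w x * (u x - u (x - unitv i)) =
      ∑ x, w (x + unitv i) * (u (x + unitv i) - u x) := by
    rw [← Equiv.sum_comp (Equiv.addRight (unitv i))]
    simp
  rw [← sum_congr rfl fun x _ => (mul_add (w x) _ _).symm, sum_add_distrib, shift,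
    ← sum_add_distrib]
  exact sum_congr rfl fun x _ => by ring

theorem stmt_3_general (d : ℕ) (N : Fin d → ℕ) [∀ i, NeZero (N i)]
    (ε : ℝ) (hε : 0 < ε)
    (D : (TorusE d N → ℝ) → Matrix (TorusV d N) (TorusV d N) ℝ)
    (hD : ∀ t, (D t).PosDef)
    (hform : ∀ (t : TorusE d N → ℝ) (f : TorusV d N → ℝ),
      f ⬝ᵥ ((D t) *ᵥ f) =
        (∑ e : TorusE d N, Real.exp (t e) * (f e.1 - f (e.1 + unitv e.2)) ^ 2)
          + ε * ∑ j : TorusV d N, (f j) ^ 2)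
    (t : TorusE d N → ℝ) (v u : TorusV d N → ℝ)
    (hu : ∀ x, torusLap u x = v x) :
    0 ≤ v ⬝ᵥ ((D t)⁻¹ *ᵥ v) ∧
      v ⬝ᵥ ((D t)⁻¹ *ᵥ v) ≤
        ∑ e : TorusE d N, (u e.1 - u (e.1 + unitv e.2)) ^ 2 * Real.exp (-(t e)) := by
  set w := (D t)⁻¹ *ᵥ v
  have hDw : D t *ᵥ w = v := by
    rw [mulVec_mulVec, mul_nonsing_inv _ (hD t).det_pos.ne'.isUnit, one_mulVec]
  have hB : v ⬝ᵥ w = ∑ e, torusGrad u e * torusGrad w e := by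
    rw [dotProduct_comm, ← sum_mul_torusLap]
    exact sum_congr rfl fun x _ => by rw [hu x]
  have hSB : ∑ e, Real.exp (t e) * torusGrad w e ^ 2 ≤ v ⬝ᵥ w := by
    have hquad : w ⬝ᵥ (D t *ᵥ w) = ∑ e, Real.exp (t e) * torusGrad w e ^ 2
        + ε * ∑ j, w j ^ 2 := hform t w
    have hmass : 0 ≤ ε * ∑ j, w j ^ 2 := by positivity
    rw [hDw, dotProduct_comm] at hquad
    linarith
  have hS : 0 ≤ ∑ e, Real.exp (t e) * torusGrad w e ^ 2 := by positivity
  have hA : 0 ≤ ∑ e, torusGrad u e ^ 2 * Real.exp (-(t e)) := by positivity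
  have hCS := sq_sum_mul_le_sum_sq_mul_exp_neg_mul_sum_exp_mul_sq univ (torusGrad u)
    (torusGrad w) t
  rw [← hB] at hCS
  refine ⟨hS.trans hSB, ?_⟩
  change v ⬝ᵥ w ≤ ∑ e, torusGrad u e ^ 2 * Real.exp (-(t e))
  nlinarith [mul_le_mul_of_nonneg_left hSB hA]

/-- Fix `d ≥ 1`, the discrete torus `T_N` (side lengths ≥ 3) and
`ε > 0`.  For `t ∈ ℝ^{E(T_N)}` let `D t` be the symmetric positive definite matrix with
`[f; D(t) f] = ∑_{jk ∈ E(T_N)} e^{t_{jk}} (f_j − f_k)² + ε ∑_j f_j²`, and let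
`G(t) = D(t)⁻¹`.  Then for every `v` with `∑_j v_j = 0` and every `u` solving
`−Δ^p u = v`, one has
`0 ≤ [v; G(t) v] ≤ ∑_{jk ∈ E(T_N)} (u_j − u_k)² e^{−t_{jk}}`. -/
theorem stmt_3 (d : ℕ) (hd : 1 ≤ d) (N : Fin d → ℕ) [∀ i, NeZero (N i)]
    (hN : ∀ i, 3 ≤ N i) (ε : ℝ) (hε : 0 < ε)
    (D : (TorusE d N → ℝ) → Matrix (TorusV d N) (TorusV d N) ℝ)
    (hD : ∀ t, (D t).PosDef)
    (hform : ∀ (t : TorusE d N → ℝ) (f : TorusV d N → ℝ),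
      f ⬝ᵥ ((D t) *ᵥ f) =
        (∑ e : TorusE d N, Real.exp (t e) * (f e.1 - f (e.1 + unitv e.2)) ^ 2)
          + ε * ∑ j : TorusV d N, (f j) ^ 2)
    (t : TorusE d N → ℝ) (v u : TorusV d N → ℝ)
    (hv : ∑ j : TorusV d N, v j = 0)
    (hu : ∀ x, torusLap u x = v x) :
    0 ≤ v ⬝ᵥ ((D t)⁻¹ *ᵥ v) ∧
      v ⬝ᵥ ((D t)⁻¹ *ᵥ v) ≤
        ∑ e : TorusE d N, (u e.1 - u (e.1 + unitv e.2)) ^ 2 * Real.exp (-(t e)) :=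
  stmt_3_general d N ε hε D hD hform t v u hu
end

section
/- Fix d ≥ 1, 0 < α < 1/2, and let μ̂ be, for any side lengths N and any ε > 0, the probability measure on ℝ^Λ × ℝ^{E(T_N)} with density proportional to exp(−A(φ,t)) ∏_{jk ∈ E(T_N)} f_α(e^{t_{jk}}) e^{t_{jk}}, where A(φ,t) = Σ_{jk ∈ E(T_N)} (1 + (φ_j − φ_k)²) e^{t_{jk}} + ε Σ_{j∈Λ} φ_j², and let ⟨·⟩ denote expectation under μ̂. Then there exists a constant C_u(α) < ∞, depending only on α (in particular independent of N, ε and the edge), such that for every edge jk ∈ E(T_N), ⟨t_{jk}⟩ ≤ C_u(α). -/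
/-!
For fixed `φ` and fixed `t` off the edge `e`, the density is, as a function of `s = t_e`,
proportional to `e^{-c e^s} f_α(e^s) e^s` with `c = 1 + (φ_j - φ_k)² ≥ 1`. After the substitution
`x = e^s`, the bound `x e^{-cx} ≤ e^{-1} e^{-(c-1)x}` and the Laplace transform give
`∫ x e^{-cx} f_α ≤ e^{-1-(c-1)^α} ≤ e^{-c^α} = ∫ e^{-cx} f_α`, the last step by subadditivity of
`x ↦ x^α`. Integrating over the other variables, `⟨e^{t_e}⟩ ≤ 1`, hence
`⟨t_e⟩ ≤ ⟨e^{t_e}⟩ - 1 ≤ 0`.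
-/

open MeasureTheory

/-- The Gaussian action
`A(φ,t) = ∑_{jk ∈ E(T_N)} (1 + (φ_j − φ_k)²) e^{t_{jk}} + ε ∑_{j ∈ Λ} φ_j²`. -/
noncomputable def action (d : ℕ) (N : Fin d → ℕ) [∀ i, NeZero (N i)] (ε : ℝ)
    (φ : TorusV d N → ℝ) (t : TorusE d N → ℝ) : ℝ :=
  (∑ e : TorusE d N, (1 + (φ e.1 - φ (e.1 + unitv e.2)) ^ 2) * Real.exp (t e))
    + ε * ∑ j : TorusV d N, (φ j) ^ 2

/-- The (unnormalized) density
`exp(−A(φ,t)) ∏_{jk ∈ E(T_N)} f_α(e^{t_{jk}}) e^{t_{jk}}` of the measure `μ̂`. -/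
noncomputable def dens (f : ℝ → ℝ) (d : ℕ) (N : Fin d → ℕ) [∀ i, NeZero (N i)] (ε : ℝ)
    (φ : TorusV d N → ℝ) (t : TorusE d N → ℝ) : ℝ :=
  Real.exp (-(action d N ε φ t)) * ∏ e : TorusE d N, f (Real.exp (t e)) * Real.exp (t e)

/-- Expectation `⟨F⟩` under the probability measure `μ̂` with density proportional to
`dens`, expressed as a ratio of Lebesgue integrals on `ℝ^Λ × ℝ^{E(T_N)}`. -/
noncomputable def expec (f : ℝ → ℝ) (d : ℕ) (N : Fin d → ℕ) [∀ i, NeZero (N i)] (ε : ℝ)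
    (F : (TorusV d N → ℝ) → (TorusE d N → ℝ) → ℝ) : ℝ :=
  (∫ p : (TorusV d N → ℝ) × (TorusE d N → ℝ), F p.1 p.2 * dens f d N ε p.1 p.2) /
    ∫ p : (TorusV d N → ℝ) × (TorusE d N → ℝ), dens f d N ε p.1 p.2

open Set Real Function

open scoped ENNReal

namespace MeasurableEquiv

section

variable {ι : Type*} [DecidableEq ι] (β : Type*) [MeasurableSpace β]

def piSplitAt (i : ι) : (ι → β) ≃ᵐ β × ({j // j ≠ i} → β) :=
  (piEquivPiSubtypeProd (fun _ => β) (· = i)).trans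
    (prodCongr (funUnique {j // j = i} β) (refl _))

variable {β}

theorem piSplitAt_symm_apply (i : ι) (s : β) (r : {j // j ≠ i} → β) (j : ι) :
    (piSplitAt β i).symm (s, r) j = if h : j = i then s else r ⟨j, h⟩ := rfl

theorem update_piSplitAt_symm (i : ι) (s s' : β) (r : {j // j ≠ i} → β) :
    update ((piSplitAt β i).symm (s', r)) i s = (piSplitAt β i).symm (s, r) := by
  ext j
  by_cases h : j = i
  · subst h; simp [piSplitAt_symm_apply]
  · simp [piSplitAt_symm_apply, h]

end

theorem volume_preserving_piSplitAt {ι : Type*} [DecidableEq ι] [Fintype ι] {β : Type*}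
    [MeasureSpace β] [SigmaFinite (volume : Measure β)] (i : ι) :
    MeasurePreserving (piSplitAt β i) volume volume := by
  have hsplit := volume_preserving_piEquivPiSubtypeProd (fun _ : ι => β) (· = i)
  -- `volume_preserving_funUnique` is stated for another (propositionally equal) `Fintype` instance
  have hU : ∀ [Fintype {j // j = i}],
      MeasurePreserving (funUnique {j // j = i} β) volume volume := by
    intro _
    convert volume_preserving_funUnique {j // j = i} β
  rw [Measure.volume_eq_prod] at hsplit ⊢
  exact (@hU (Subtype.fintype _)).prod (MeasurePreserving.id volume) |>.comp hsplit

end MeasurableEquiv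

open MeasurableEquiv in
theorem lintegral_le_lintegral_of_lintegral_update_le {α : Type*} [MeasureSpace α]
    [SigmaFinite (volume : Measure α)] {ι : Type*} [DecidableEq ι] [Fintype ι]
    {β : Type*} [MeasureSpace β] [SigmaFinite (volume : Measure β)] (i : ι)
    {F G : α × (ι → β) → ℝ≥0∞} (hF : AEMeasurable F) (hG : AEMeasurable G)
    (hFG : ∀ a x, ∫⁻ s, F (a, update x i s) ≤ ∫⁻ s, G (a, update x i s)) :
    ∫⁻ p, F p ≤ ∫⁻ p, G p := by
  let Ψ : α × (ι → β) ≃ᵐ (α × ({j // j ≠ i} → β)) × β :=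
    (prodCongr (refl α) ((piSplitAt β i).trans prodComm)).trans prodAssoc.symm
  have hmp : MeasurePreserving Ψ.symm volume volume := by
    refine MeasurePreserving.symm _ ?_
    rw [Measure.volume_eq_prod]
    exact volume_preserving_prodAssoc.symm.comp ((MeasurePreserving.id volume).prod
      (Measure.measurePreserving_swap.comp (volume_preserving_piSplitAt i)))
  have hemb := Ψ.symm.measurableEmbedding
  rw [← hmp.lintegral_comp_emb hemb, ← hmp.lintegral_comp_emb hemb, Measure.volume_eq_prod,
    lintegral_prod (fun q => F _) (hF.comp_quasiMeasurePreserving hmp.quasiMeasurePreserving),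
    lintegral_prod (fun q => G _) (hG.comp_quasiMeasurePreserving hmp.quasiMeasurePreserving)]
  refine lintegral_mono fun ⟨a, r⟩ => ?_
  rcases isEmpty_or_nonempty β with hβ | ⟨⟨s'⟩⟩
  · simp only [lintegral_of_isEmpty, le_rfl]
  have h := hFG a ((piSplitAt β i).symm (s', r))
  simp only [update_piSplitAt_symm] at h
  exact h

theorem integral_mul_nonpos_of_lintegral_exp_mul_le {X : Type*} [MeasurableSpace X]
    {μ : Measure X} {T ρ : X → ℝ} (hT : Measurable T) (hρ : Integrable ρ μ) (hρ0 : ∀ x, 0 ≤ ρ x)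
    (h : ∫⁻ x, ENNReal.ofReal (exp (T x) * ρ x) ∂μ ≤ ∫⁻ x, ENNReal.ofReal (ρ x) ∂μ) :
    ∫ x, T x * ρ x ∂μ ≤ 0 := by
  have hexp0 : 0 ≤ᵐ[μ] fun x => exp (T x) * ρ x :=
    ae_of_all _ fun x => mul_nonneg (exp_pos _).le (hρ0 x)
  have hρ_fin := (hasFiniteIntegral_iff_ofReal (ae_of_all _ hρ0)).1 hρ.2
  have hexp_int : Integrable (fun x => exp (T x) * ρ x) μ :=
    ⟨hT.exp.aestronglyMeasurable.mul hρ.1,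
      (hasFiniteIntegral_iff_ofReal hexp0).2 (h.trans_lt hρ_fin)⟩
  have hexp_le : ∫ x, exp (T x) * ρ x ∂μ ≤ ∫ x, ρ x ∂μ := by
    rw [integral_eq_lintegral_of_nonneg_ae hexp0 hexp_int.1,
      integral_eq_lintegral_of_nonneg_ae (ae_of_all _ hρ0) hρ.1]
    exact ENNReal.toReal_mono hρ_fin.ne h
  by_cases hTρ : Integrable (fun x => T x * ρ x) μ
  · calc ∫ x, T x * ρ x ∂μ ≤ ∫ x, (exp (T x) * ρ x - ρ x) ∂μ :=
          integral_mono hTρ (hexp_int.sub hρ) fun x => by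
            nlinarith [add_one_le_exp (T x), hρ0 x]
      _ = ∫ x, exp (T x) * ρ x ∂μ - ∫ x, ρ x ∂μ := integral_sub hexp_int hρ
      _ ≤ 0 := by linarith
  · rw [integral_undef hTρ]

theorem lintegral_ofReal_exp_mul_comp_exp (g : ℝ → ℝ≥0∞) :
    ∫⁻ s, ENNReal.ofReal (exp s) * g (exp s) = ∫⁻ x in Ioi 0, g x := by
  rw [← range_exp, ← image_univ,
    lintegral_image_eq_lintegral_abs_deriv_mul MeasurableSet.univ
      (fun s _ => (hasDerivAt_exp s).hasDerivWithinAt) exp_injective.injOn,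
    Measure.restrict_univ]
  simp_rw [abs_of_pos (exp_pos _)]

section StableLaplace

variable {α : ℝ} {f : ℝ → ℝ}

theorem lintegral_Ioi_exp_neg_mul_eq (hf : ∀ x ∈ Ioi (0 : ℝ), 0 ≤ f x)
    (hlap : ∀ l : ℝ, 0 ≤ l → ∫ x in Ioi (0 : ℝ), exp (-l * x) * f x = exp (-(l ^ α)))
    {c : ℝ} (hc : 0 ≤ c) :
    ∫⁻ x in Ioi 0, ENNReal.ofReal (exp (-c * x) * f x) = ENNReal.ofReal (exp (-(c ^ α))) := by
  have hint : IntegrableOn (fun x => exp (-c * x) * f x) (Ioi 0) :=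
    .of_integral_ne_zero (by rw [hlap c hc]; positivity)
  rw [← hlap c hc, ofReal_integral_eq_lintegral_ofReal hint]
  filter_upwards [ae_restrict_mem measurableSet_Ioi] with x hx
  exact mul_nonneg (exp_pos _).le (hf x hx)

theorem lintegral_Ioi_mul_exp_neg_mul_le (hα0 : 0 ≤ α) (hα1 : α ≤ 1)
    (hf : ∀ x ∈ Ioi (0 : ℝ), 0 ≤ f x)
    (hlap : ∀ l : ℝ, 0 ≤ l → ∫ x in Ioi (0 : ℝ), exp (-l * x) * f x = exp (-(l ^ α)))
    {c : ℝ} (hc : 1 ≤ c) :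
    ∫⁻ x in Ioi 0, ENNReal.ofReal (x * (exp (-c * x) * f x))
      ≤ ∫⁻ x in Ioi 0, ENNReal.ofReal (exp (-c * x) * f x) := by
  have hpt : ∀ x ∈ Ioi (0 : ℝ),
      x * (exp (-c * x) * f x) ≤ exp (-1) * (exp (-(c - 1) * x) * f x) := by
    intro x hx
    have hx_le : x ≤ exp (x - 1) := by linarith [add_one_le_exp (x - 1)]
    calc x * (exp (-c * x) * f x) ≤ exp (x - 1) * (exp (-c * x) * f x) :=
          mul_le_mul_of_nonneg_right hx_le (mul_nonneg (exp_pos _).le (hf x hx))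
      _ = exp (-1) * (exp (-(c - 1) * x) * f x) := by
          rw [← mul_assoc, ← mul_assoc, ← exp_add, ← exp_add]; ring_nf
  have hsubadd : c ^ α ≤ (c - 1) ^ α + 1 := by
    have h := rpow_add_le_add_rpow (sub_nonneg.2 hc) zero_le_one hα0 hα1
    rwa [sub_add_cancel, one_rpow] at h
  calc ∫⁻ x in Ioi 0, ENNReal.ofReal (x * (exp (-c * x) * f x))
      ≤ ∫⁻ x in Ioi 0, ENNReal.ofReal (exp (-1)) * ENNReal.ofReal (exp (-(c - 1) * x) * f x) :=
        setLIntegral_mono' measurableSet_Ioi fun x hx => by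
          rw [← ENNReal.ofReal_mul (exp_pos _).le]; exact ENNReal.ofReal_le_ofReal (hpt x hx)
    _ = ENNReal.ofReal (exp (-1 + -((c - 1) ^ α))) := by
        rw [lintegral_const_mul' _ _ ENNReal.ofReal_ne_top,
          lintegral_Ioi_exp_neg_mul_eq hf hlap (by linarith), ← ENNReal.ofReal_mul (exp_pos _).le,
          exp_add]
    _ ≤ ENNReal.ofReal (exp (-(c ^ α))) := by gcongr; linarith
    _ = ∫⁻ x in Ioi 0, ENNReal.ofReal (exp (-c * x) * f x) :=
        (lintegral_Ioi_exp_neg_mul_eq hf hlap (by linarith)).symm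

theorem lintegral_exp_mul_slice_le (hα0 : 0 ≤ α) (hα1 : α ≤ 1)
    (hf : ∀ x ∈ Ioi (0 : ℝ), 0 ≤ f x)
    (hlap : ∀ l : ℝ, 0 ≤ l → ∫ x in Ioi (0 : ℝ), exp (-l * x) * f x = exp (-(l ^ α)))
    {c C : ℝ} (hc : 1 ≤ c) (hC : 0 ≤ C) :
    ∫⁻ s, ENNReal.ofReal (exp s * (C * (exp (-(c * exp s)) * (f (exp s) * exp s))))
      ≤ ∫⁻ s, ENNReal.ofReal (C * (exp (-(c * exp s)) * (f (exp s) * exp s))) := by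
  have key := lintegral_Ioi_mul_exp_neg_mul_le hα0 hα1 hf hlap hc
  rw [← lintegral_ofReal_exp_mul_comp_exp, ← lintegral_ofReal_exp_mul_comp_exp] at key
  calc ∫⁻ s, ENNReal.ofReal (exp s * (C * (exp (-(c * exp s)) * (f (exp s) * exp s))))
      = ENNReal.ofReal C * ∫⁻ s, ENNReal.ofReal (exp s) *
          ENNReal.ofReal (exp s * (exp (-c * exp s) * f (exp s))) := by
        rw [← lintegral_const_mul' _ _ ENNReal.ofReal_ne_top]
        congr 1 with s
        rw [← ENNReal.ofReal_mul (exp_pos _).le, ← ENNReal.ofReal_mul hC]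
        ring_nf
    _ ≤ ENNReal.ofReal C * ∫⁻ s, ENNReal.ofReal (exp s) *
          ENNReal.ofReal (exp (-c * exp s) * f (exp s)) := by gcongr
    _ = ∫⁻ s, ENNReal.ofReal (C * (exp (-(c * exp s)) * (f (exp s) * exp s))) := by
        rw [← lintegral_const_mul' _ _ ENNReal.ofReal_ne_top]
        congr 1 with s
        rw [← ENNReal.ofReal_mul (exp_pos _).le, ← ENNReal.ofReal_mul hC]
        ring_nf

end StableLaplace

section Torus

variable {d : ℕ} {N : Fin d → ℕ} [∀ i, NeZero (N i)] {f : ℝ → ℝ}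

theorem dens_nonneg (hf : ∀ x ∈ Ioi (0 : ℝ), 0 ≤ f x) (ε : ℝ) (φ : TorusV d N → ℝ)
    (t : TorusE d N → ℝ) : 0 ≤ dens f d N ε φ t :=
  mul_nonneg (exp_pos _).le
    (Finset.prod_nonneg fun _ _ => mul_nonneg (hf _ (exp_pos _)) (exp_pos _).le)

theorem exists_dens_update_eq (hf : ∀ x ∈ Ioi (0 : ℝ), 0 ≤ f x) (ε : ℝ) (φ : TorusV d N → ℝ)
    (t : TorusE d N → ℝ) (e : TorusE d N) :
    ∃ C, 0 ≤ C ∧ ∀ s, dens f d N ε φ (update t e s) =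
      C * (exp (-((1 + (φ e.1 - φ (e.1 + unitv e.2)) ^ 2) * exp s)) * (f (exp s) * exp s)) := by
  set others := Finset.univ.erase e
  refine ⟨exp (-((∑ e' ∈ others, (1 + (φ e'.1 - φ (e'.1 + unitv e'.2)) ^ 2) * exp (t e'))
      + ε * ∑ j, φ j ^ 2)) * ∏ e' ∈ others, f (exp (t e')) * exp (t e'),
    mul_nonneg (exp_pos _).le
      (Finset.prod_nonneg fun _ _ => mul_nonneg (hf _ (exp_pos _)) (exp_pos _).le), fun s => ?_⟩
  have hothers : ∀ e' ∈ others, update t e s e' = t e' := fun e' he' =>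
    update_of_ne (Finset.ne_of_mem_erase he') _ _
  rw [dens, action, ← Finset.add_sum_erase _ _ (Finset.mem_univ e),
    ← Finset.mul_prod_erase _ _ (Finset.mem_univ e), update_self,
    Finset.sum_congr rfl fun e' he' => by rw [hothers e' he'],
    Finset.prod_congr rfl fun e' he' => by rw [hothers e' he']]
  rw [show ∀ a b c : ℝ, -(a + b + c) = -(b + c) + -a from fun a b c => by ring, exp_add]
  ring

theorem lintegral_exp_mul_dens_le {α : ℝ} (hα0 : 0 ≤ α) (hα1 : α ≤ 1)
    (hf : ∀ x ∈ Ioi (0 : ℝ), 0 ≤ f x)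
    (hlap : ∀ l : ℝ, 0 ≤ l → ∫ x in Ioi (0 : ℝ), exp (-l * x) * f x = exp (-(l ^ α)))
    (ε : ℝ) (e : TorusE d N)
    (hdens : AEMeasurable fun p : (TorusV d N → ℝ) × (TorusE d N → ℝ) => dens f d N ε p.1 p.2) :
    ∫⁻ p : (TorusV d N → ℝ) × (TorusE d N → ℝ), ENNReal.ofReal (exp (p.2 e) * dens f d N ε p.1 p.2)
      ≤ ∫⁻ p : (TorusV d N → ℝ) × (TorusE d N → ℝ), ENNReal.ofReal (dens f d N ε p.1 p.2) := by
  have hexp : Measurable fun p : (TorusV d N → ℝ) × (TorusE d N → ℝ) => exp (p.2 e) :=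
    ((measurable_pi_apply e).comp measurable_snd).exp
  refine lintegral_le_lintegral_of_lintegral_update_le e
    (hexp.aemeasurable.mul hdens).ennreal_ofReal hdens.ennreal_ofReal fun φ t => ?_
  obtain ⟨C, hC, hCeq⟩ := exists_dens_update_eq hf ε φ t e
  simp only [update_self, hCeq]
  exact lintegral_exp_mul_slice_le hα0 hα1 hf hlap
    (le_add_of_nonneg_right (sq_nonneg _)) hC

end Torus

theorem stmt_7_general (d : ℕ) (α : ℝ) (hα0 : 0 < α) (hα : α < 1 / 2)
    (f : ℝ → ℝ) (hfpos : ∀ x ∈ Set.Ioi (0 : ℝ), 0 < f x)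
    (hlap : ∀ l : ℝ, 0 ≤ l →
      ∫ x in Set.Ioi (0 : ℝ), Real.exp (-l * x) * f x = Real.exp (-(l ^ α))) :
    ∃ Cu : ℝ, ∀ (N : Fin d → ℕ) [∀ i, NeZero (N i)], (∀ i, 3 ≤ N i) →
      ∀ ε : ℝ, 0 < ε → ∀ e : TorusE d N,
        expec f d N ε (fun _ t => t e) ≤ Cu := by
  have hf : ∀ x ∈ Ioi (0 : ℝ), 0 ≤ f x := fun x hx => (hfpos x hx).le
  refine ⟨0, fun N _ _ ε _ e => ?_⟩
  by_cases hint : Integrable fun p : (TorusV d N → ℝ) × (TorusE d N → ℝ) => dens f d N ε p.1 p.2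
  · exact div_nonpos_of_nonpos_of_nonneg
      (integral_mul_nonpos_of_lintegral_exp_mul_le ((measurable_pi_apply e).comp measurable_snd)
        hint (fun p => dens_nonneg hf ε p.1 p.2)
        (lintegral_exp_mul_dens_le hα0.le (by linarith) hf hlap ε e hint.aemeasurable))
      (integral_nonneg fun p => dens_nonneg hf ε p.1 p.2)
  · rw [expec, integral_undef hint, div_zero]

/-- Fix `d ≥ 1`, `0 < α < 1/2`.  With `⟨·⟩` the expectation under
`μ̂` (any side lengths `N` ≥ 3, any `ε > 0`), there is a constant `C_u(α) < ∞`,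
independent of `N`, `ε` and the edge, with `⟨t_{jk}⟩ ≤ C_u(α)` for every edge. -/
theorem stmt_7 (d : ℕ) (hd : 1 ≤ d) (α : ℝ) (hα0 : 0 < α) (hα : α < 1 / 2)
    (f : ℝ → ℝ) (hfpos : ∀ x ∈ Set.Ioi (0 : ℝ), 0 < f x)
    (hlap : ∀ l : ℝ, 0 ≤ l →
      ∫ x in Set.Ioi (0 : ℝ), Real.exp (-l * x) * f x = Real.exp (-(l ^ α))) :
    ∃ Cu : ℝ, ∀ (N : Fin d → ℕ) [∀ i, NeZero (N i)], (∀ i, 3 ≤ N i) →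
      ∀ ε : ℝ, 0 < ε → ∀ e : TorusE d N,
        expec f d N ε (fun _ t => t e) ≤ Cu :=
  stmt_7_general d α hα0 hα f hfpos hlap
end
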